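/- Let M ⊆ ℝ³ be a set such that for each coordinate index i ∈ {1,2,3} and each real value c, the set of points of M whose i-th coordinate equals c has cardinality 0 or 2. Define a simple graph G(M) whose vertices are the points of M, with two distinct points adjacent if and only if they agree in some coordinate (i.e., they lie in a common layer). Then M is basic if and only if the graph G(M) is basic. -/

import Mathlib

/-- A set `M ⊆ ℝ³` is *basic* if every real-valued function on `M` decomposes as a sum of
functions of the three separate coordinates. -/
def IsBasic (M : Set (Fin 3 → ℝ)) : Prop :=
  ∀ f : (Fin 3 → ℝ) → ℝ, ∃ f₁ f₂ f₃ : ℝ → ℝ,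
    ∀ p ∈ M, f p = f₁ (p 0) + f₂ (p 1) + f₃ (p 2)

/-- The graph `G(M)` whose vertices are the points of `M`, two distinct points being
adjacent iff they agree in some coordinate (i.e. lie in a common layer). -/
def layerGraph (M : Set (Fin 3 → ℝ)) : SimpleGraph M where
  Adj p q := p ≠ q ∧ ∃ i : Fin 3, (p : Fin 3 → ℝ) i = (q : Fin 3 → ℝ) i
  symm := by
    constructor
    rintro p q ⟨hne, i, hi⟩
    exact ⟨hne.symm, i, hi.symm⟩
  loopless := by
    constructor
    rintro p ⟨hne, -⟩
    exact hne rfl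

/-- A (possibly infinite) simple graph is *basic* if for every assignment `b` of reals to
the vertices there is an assignment `x` of reals to the edges such that the number at
each vertex equals the (finite) sum of the numbers on its incident edges. -/
def GraphBasic {V : Type} (G : SimpleGraph V) : Prop :=
  ∀ b : V → ℝ, ∃ x : Sym2 V → ℝ,
    ∀ v : V, (∑ᶠ e ∈ G.incidenceSet v, x e) = b v


/-!
Under the layer condition every point `p ∈ M` has, in each direction `i`, a unique partner in its
layer, so the edges of `G(M)` at `p` are the (at most three) layer edges `s(p, partner p i)`, and an
edge `s(p, q)` lies in exactly the layers indexed by the coordinates where `p` and `q` agree.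
A decomposition `∑ i, F i (p i)` thus gives an edge weighting by putting on each edge the sum of
`F` over the layers containing it; conversely an edge weight, spread evenly over the layers
containing its edge, gives the functions `F i`.
-/

open Finset

lemma Set.existsUnique_mem_ne_of_eq_pair {α : Type*} {s : Set α} {a b p : α} (hab : a ≠ b)
    (hs : s = {a, b}) (hp : p ∈ s) : ∃! q, q ∈ s ∧ q ≠ p := by
  subst hs
  rcases hp with rfl | rfl
  · exact ⟨b, ⟨by simp, hab.symm⟩, by rintro q ⟨rfl | rfl, hq⟩ <;> simp_all⟩
  · exact ⟨a, ⟨by simp, hab⟩, by rintro q ⟨rfl | rfl, hq⟩ <;> simp_all⟩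

lemma Finset.sum_image_eq_sum_div_card_fiber {ι β K : Type*} [DecidableEq β] [DivisionSemiring K]
    [CharZero K] (s : Finset ι) (g : ι → β) (x : β → K) :
    ∑ e ∈ s.image g, x e = ∑ i ∈ s, x (g i) / #{j ∈ s | g j = g i} := by
  refine sum_image' (fun i => x (g i) / #{j ∈ s | g j = g i}) fun i hi => ?_
  have hpos : 0 < #{j ∈ s | g j = g i} := card_pos.mpr ⟨i, mem_filter.mpr ⟨hi, rfl⟩⟩
  rw [sum_congr rfl fun j hj => by rw [(mem_filter.mp hj).2], sum_const, nsmul_eq_mul',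
    div_mul_cancel₀ _ (Nat.cast_ne_zero.mpr hpos.ne')]

def HasTwoPointLayers (M : Set (Fin 3 → ℝ)) : Prop :=
  ∀ (i : Fin 3) (c : ℝ),
    {p ∈ M | p i = c} = ∅ ∨ ∃ a b : Fin 3 → ℝ, a ≠ b ∧ {p ∈ M | p i = c} = {a, b}

lemma isBasic_iff {M : Set (Fin 3 → ℝ)} :
    IsBasic M ↔
      ∀ f : M → ℝ, ∃ F : Fin 3 → ℝ → ℝ, ∀ p : M, f p = ∑ i, F i (p.1 i) := by
  constructor
  · intro hM f
    obtain ⟨f₁, f₂, f₃, hf⟩ := hM (Function.extend Subtype.val f 0)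
    refine ⟨![f₁, f₂, f₃], fun p => ?_⟩
    simpa [Fin.sum_univ_three, Subtype.val_injective.extend_apply] using hf p p.2
  · intro hM f
    obtain ⟨F, hF⟩ := hM fun p => f p
    exact ⟨F 0, F 1, F 2, fun p hp => by simpa [Fin.sum_univ_three] using hF ⟨p, hp⟩⟩

/-- The coordinates in which the two endpoints of an edge agree, i.e. the layers containing it. -/
noncomputable def commonCoords {M : Set (Fin 3 → ℝ)} : Sym2 M → Finset (Fin 3) :=
  Sym2.lift ⟨fun a b => {j | a.1 j = b.1 j}, fun a b => by simp only [eq_comm]⟩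

lemma commonCoords_mk {M : Set (Fin 3 → ℝ)} (a b : M) :
    commonCoords s(a, b) = ({j | a.1 j = b.1 j} : Finset (Fin 3)) :=
  rfl

namespace HasTwoPointLayers

variable {M : Set (Fin 3 → ℝ)}

lemma existsUnique_partner (hM : HasTwoPointLayers M) (p : M) (i : Fin 3) :
    ∃! q : M, q.1 i = p.1 i ∧ q ≠ p := by
  rcases hM i (p.1 i) with h | ⟨a, b, hab, h⟩
  · exact (Set.eq_empty_iff_forall_notMem.mp h p.1 ⟨p.2, rfl⟩).elim
  · obtain ⟨q, ⟨⟨hqM, hqi⟩, hqp⟩, hq⟩ :=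
      Set.existsUnique_mem_ne_of_eq_pair hab h ⟨p.2, rfl⟩
    refine ⟨⟨q, hqM⟩, ⟨hqi, fun h => hqp (congrArg Subtype.val h)⟩, ?_⟩
    rintro r ⟨hri, hrp⟩
    exact Subtype.ext (hq r ⟨⟨r.2, hri⟩, fun h => hrp (Subtype.ext h)⟩)

section Partner

variable (hM : HasTwoPointLayers M)

/-- The other point of `M` in the layer through `p` perpendicular to the `i`-th axis. -/
noncomputable def partner (p : M) (i : Fin 3) : M :=
  (hM.existsUnique_partner p i).exists.choose

lemma partner_apply (p : M) (i : Fin 3) : (hM.partner p i).1 i = p.1 i :=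
  (hM.existsUnique_partner p i).exists.choose_spec.1

lemma partner_ne (p : M) (i : Fin 3) : hM.partner p i ≠ p :=
  (hM.existsUnique_partner p i).exists.choose_spec.2

lemma eq_partner {p q : M} {i : Fin 3} (hi : q.1 i = p.1 i) (hqp : q ≠ p) :
    q = hM.partner p i :=
  (hM.existsUnique_partner p i).unique ⟨hi, hqp⟩ ⟨hM.partner_apply p i, hM.partner_ne p i⟩

lemma partner_eq_iff {p q : M} (hqp : q ≠ p) (i : Fin 3) : hM.partner p i = q ↔ q.1 i = p.1 i :=
  ⟨fun h => h ▸ hM.partner_apply p i, fun hi => (hM.eq_partner hi hqp).symm⟩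

noncomputable def layerEdge (p : M) (i : Fin 3) : Sym2 M := s(p, hM.partner p i)

lemma layerEdge_eq_of_apply_eq {p q : M} {i : Fin 3} (hi : q.1 i = p.1 i) :
    hM.layerEdge q i = hM.layerEdge p i := by
  rcases eq_or_ne q p with rfl | hqp
  · rfl
  · rw [layerEdge, layerEdge, ← hM.eq_partner hi hqp, hM.eq_partner hi.symm hqp.symm,
      Sym2.eq_swap]

lemma layerGraph_adj_iff (p q : M) : (layerGraph M).Adj p q ↔ ∃ i, hM.partner p i = q := by
  refine ⟨fun ⟨hpq, i, hi⟩ => ⟨i, (hM.partner_eq_iff hpq.symm i).mpr hi.symm⟩, ?_⟩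
  rintro ⟨i, rfl⟩
  exact ⟨(hM.partner_ne p i).symm, i, (hM.partner_apply p i).symm⟩

lemma incidenceSet_eq (p : M) :
    (layerGraph M).incidenceSet p = ↑(univ.image (hM.layerEdge p)) := by
  ext e
  simp only [coe_image, coe_univ, Set.image_univ, Set.mem_range, layerEdge]
  constructor
  · rintro ⟨he, hp⟩
    obtain ⟨q, rfl⟩ := Sym2.mem_iff_exists.mp hp
    obtain ⟨i, rfl⟩ := (hM.layerGraph_adj_iff p q).mp he
    exact ⟨i, rfl⟩
  · rintro ⟨i, rfl⟩
    exact (layerGraph M).mem_incidenceSet _ _ |>.mpr ((hM.layerGraph_adj_iff _ _).mpr ⟨i, rfl⟩)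

lemma layerEdge_eq_iff (p : M) (i j : Fin 3) :
    hM.layerEdge p j = hM.layerEdge p i ↔ p.1 j = (hM.partner p i).1 j := by
  rw [layerEdge, layerEdge, Sym2.congr_right, hM.partner_eq_iff (hM.partner_ne p i), eq_comm]

lemma filter_layerEdge_eq (p : M) (i : Fin 3) :
    ({j | hM.layerEdge p j = hM.layerEdge p i} : Finset (Fin 3)) =
      commonCoords (hM.layerEdge p i) := by
  ext j
  rw [mem_filter, hM.layerEdge_eq_iff, layerEdge, commonCoords_mk, mem_filter]

lemma sum_incidenceSet (x : Sym2 M → ℝ) (p : M) :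
    ∑ᶠ e ∈ (layerGraph M).incidenceSet p, x e =
      ∑ e ∈ univ.image (hM.layerEdge p), x e := by
  rw [hM.incidenceSet_eq, finsum_mem_coe_finset]

end Partner

lemma exists_edgeWeight (hM : HasTwoPointLayers M) (F : Fin 3 → ℝ → ℝ) :
    ∃ x : Sym2 M → ℝ,
      ∀ p : M, ∑ᶠ e ∈ (layerGraph M).incidenceSet p, x e = ∑ i, F i (p.1 i) := by
  refine ⟨Sym2.lift ⟨fun a b => ∑ j ∈ commonCoords s(a, b), F j (a.1 j), fun a b => ?_⟩,
    fun p => ?_⟩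
  · dsimp only
    rw [Sym2.eq_swap]
    exact sum_congr rfl fun j hj => by rw [(mem_filter.mp hj).2]
  · rw [hM.sum_incidenceSet]
    refine sum_image' _ fun i _ => ?_
    rw [hM.filter_layerEdge_eq, layerEdge, Sym2.lift_mk]

lemma exists_coordSum (hM : HasTwoPointLayers M) (x : Sym2 M → ℝ) :
    ∃ F : Fin 3 → ℝ → ℝ,
      ∀ p : M, ∑ᶠ e ∈ (layerGraph M).incidenceSet p, x e = ∑ i, F i (p.1 i) := by
  let w (e : Sym2 M) : ℝ := x e / #(commonCoords e)
  have hw (i : Fin 3) :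
      Function.FactorsThrough (fun p => w (hM.layerEdge p i)) (fun p : M => p.1 i) :=
    fun _ _ hpq => congrArg w (hM.layerEdge_eq_of_apply_eq hpq)
  refine ⟨fun i => Function.extend (fun p : M => p.1 i) (fun p => w (hM.layerEdge p i)) 0,
    fun p => ?_⟩
  rw [hM.sum_incidenceSet, sum_image_eq_sum_div_card_fiber]
  refine sum_congr rfl fun i _ => ?_
  beta_reduce
  rw [(hw i).extend_apply, hM.filter_layerEdge_eq]

end HasTwoPointLayers

/-- If every layer contains either no point or exactly two points of `M`, then `M` is
basic iff the graph `G(M)` is basic. -/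
theorem basic_iff_layerGraph_basic (M : Set (Fin 3 → ℝ))
    (hlayer : ∀ (i : Fin 3) (c : ℝ),
      {p ∈ M | p i = c} = ∅ ∨ ∃ a b : Fin 3 → ℝ, a ≠ b ∧ {p ∈ M | p i = c} = {a, b}) :
    IsBasic M ↔ GraphBasic (layerGraph M) := by
  have hM : HasTwoPointLayers M := hlayer
  rw [isBasic_iff]
  constructor
  · intro h b
    obtain ⟨F, hF⟩ := h b
    obtain ⟨x, hx⟩ := hM.exists_edgeWeight F
    exact ⟨x, fun p => (hx p).trans (hF p).symm⟩
  · intro h f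
    obtain ⟨x, hx⟩ := h f
    obtain ⟨F, hF⟩ := hM.exists_coordSum x
    exact ⟨F, fun p => (hx p).symm.trans (hF p)⟩
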